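/- arXiv:2605.03629 — 4 statements merged into one kernel-verified Lean document; each statement's English description precedes it below -/
import Mathlib

section
/- If c₀₁ = c₁₀ = 1/√2 and c₀₀ = c₁₁ = 0, then the Kraus operators of the noisy-CNOT channel satisfy E₀₀ = E₁₀ = (1/2)·U_flip and E₀₁ = E₁₁ = −(1/2)·U_flip, where U_flip = |0⟩⟨0| ⊗ σ_X + |1⟩⟨1| ⊗ 𝟙, and consequently for every matrix ρ on ℂ² ⊗ ℂ², ∑_{i,j∈{0,1}} Eᵢⱼ ρ Eᵢⱼ† = U_flip ρ U_flip†, i.e. the channel reduces to the flipped-CNOT unitary channel. -/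
open Matrix Kronecker

noncomputable section

/-- The Pauli-X matrix. -/
def pauliX : Matrix (Fin 2) (Fin 2) ℂ := !![0, 1; 1, 0]

/-- The projector `|0⟩⟨0|`. -/
def P0 : Matrix (Fin 2) (Fin 2) ℂ := !![1, 0; 0, 0]

/-- The projector `|1⟩⟨1|`. -/
def P1 : Matrix (Fin 2) (Fin 2) ℂ := !![0, 0; 0, 1]

/-- The Kraus operator `E₀₀` of the noisy-CNOT channel. -/
def E00 (c₀₀ c₀₁ c₁₀ c₁₁ : ℂ) : Matrix (Fin 2 × Fin 2) (Fin 2 × Fin 2) ℂ :=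
  (Real.sqrt 2 : ℂ)⁻¹ • (P0 ⊗ₖ (c₀₀ • (1 : Matrix (Fin 2) (Fin 2) ℂ) + c₀₁ • pauliX)) +
    (Real.sqrt 2 : ℂ)⁻¹ • (P1 ⊗ₖ (c₁₀ • (1 : Matrix (Fin 2) (Fin 2) ℂ) + c₁₁ • pauliX))

/-- The Kraus operator `E₀₁` of the noisy-CNOT channel. -/
def E01 (c₀₀ c₀₁ c₁₀ c₁₁ : ℂ) : Matrix (Fin 2 × Fin 2) (Fin 2 × Fin 2) ℂ :=
  (Real.sqrt 2 : ℂ)⁻¹ • (P0 ⊗ₖ (c₀₀ • (1 : Matrix (Fin 2) (Fin 2) ℂ) - c₀₁ • pauliX)) -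
    (Real.sqrt 2 : ℂ)⁻¹ • (P1 ⊗ₖ (c₁₀ • (1 : Matrix (Fin 2) (Fin 2) ℂ) - c₁₁ • pauliX))

/-- The Kraus operator `E₁₀` of the noisy-CNOT channel. -/
def E10 (c₀₀ c₀₁ c₁₀ c₁₁ : ℂ) : Matrix (Fin 2 × Fin 2) (Fin 2 × Fin 2) ℂ :=
  (Real.sqrt 2 : ℂ)⁻¹ • (P0 ⊗ₖ (c₁₁ • (1 : Matrix (Fin 2) (Fin 2) ℂ) + c₁₀ • pauliX)) +
    (Real.sqrt 2 : ℂ)⁻¹ • (P1 ⊗ₖ (c₀₁ • (1 : Matrix (Fin 2) (Fin 2) ℂ) + c₀₀ • pauliX))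

/-- The Kraus operator `E₁₁` of the noisy-CNOT channel. -/
def E11 (c₀₀ c₀₁ c₁₀ c₁₁ : ℂ) : Matrix (Fin 2 × Fin 2) (Fin 2 × Fin 2) ℂ :=
  (Real.sqrt 2 : ℂ)⁻¹ • (P0 ⊗ₖ (c₁₁ • (1 : Matrix (Fin 2) (Fin 2) ℂ) - c₁₀ • pauliX)) -
    (Real.sqrt 2 : ℂ)⁻¹ • (P1 ⊗ₖ (c₀₁ • (1 : Matrix (Fin 2) (Fin 2) ℂ) - c₀₀ • pauliX))

/-- The family `E i j` of Kraus operators of the noisy-CNOT channel. -/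
def krausOp (c₀₀ c₀₁ c₁₀ c₁₁ : ℂ) (i j : Fin 2) : Matrix (Fin 2 × Fin 2) (Fin 2 × Fin 2) ℂ :=
  if i = 0 then (if j = 0 then E00 c₀₀ c₀₁ c₁₀ c₁₁ else E01 c₀₀ c₀₁ c₁₀ c₁₁)
  else (if j = 0 then E10 c₀₀ c₀₁ c₁₀ c₁₁ else E11 c₀₀ c₀₁ c₁₀ c₁₁)


/-- The flipped-CNOT unitary `|0⟩⟨0| ⊗ σ_X + |1⟩⟨1| ⊗ 𝟙`. -/
def Uflip : Matrix (Fin 2 × Fin 2) (Fin 2 × Fin 2) ℂ :=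
  P0 ⊗ₖ pauliX + P1 ⊗ₖ (1 : Matrix (Fin 2) (Fin 2) ℂ)

lemma kron_neg_right {m n p q : Type*} (A : Matrix m n ℂ) (B : Matrix p q ℂ) :
    A ⊗ₖ (-B) = -(A ⊗ₖ B) := by
  rw [show -B = (-1 : ℂ) • B by simp, Matrix.kronecker_smul]
  simp

/-- If `c₀₁ = c₁₀ = 1/√2` and `c₀₀ = c₁₁ = 0`, then the Kraus operators satisfy
`E₀₀ = E₁₀ = (1/2)·U_flip` and `E₀₁ = E₁₁ = −(1/2)·U_flip`, and the channel reduces to the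
flipped-CNOT unitary channel. -/
theorem kraus_flipped_cnot (c₀₀ c₀₁ c₁₀ c₁₁ : ℂ)
    (h01 : c₀₁ = (Real.sqrt 2 : ℂ)⁻¹) (h10 : c₁₀ = (Real.sqrt 2 : ℂ)⁻¹)
    (h00 : c₀₀ = 0) (h11 : c₁₁ = 0) :
    E00 c₀₀ c₀₁ c₁₀ c₁₁ = (2 : ℂ)⁻¹ • Uflip ∧
      E10 c₀₀ c₀₁ c₁₀ c₁₁ = (2 : ℂ)⁻¹ • Uflip ∧
      E01 c₀₀ c₀₁ c₁₀ c₁₁ = -((2 : ℂ)⁻¹ • Uflip) ∧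
      E11 c₀₀ c₀₁ c₁₀ c₁₁ = -((2 : ℂ)⁻¹ • Uflip) ∧
      ∀ ρ : Matrix (Fin 2 × Fin 2) (Fin 2 × Fin 2) ℂ,
        (∑ i : Fin 2, ∑ j : Fin 2,
            krausOp c₀₀ c₀₁ c₁₀ c₁₁ i j * ρ * (krausOp c₀₀ c₀₁ c₁₀ c₁₁ i j)ᴴ) =
          Uflip * ρ * Uflipᴴ := by
  have hs : ((Real.sqrt 2 : ℂ))⁻¹ * (Real.sqrt 2 : ℂ)⁻¹ = (2:ℂ)⁻¹ := by
    rw [← mul_inv]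
    congr 1
    norm_cast
    exact Real.mul_self_sqrt (by norm_num)
  subst h01 h10 h00 h11
  have hE00 : E00 0 (Real.sqrt 2 : ℂ)⁻¹ (Real.sqrt 2 : ℂ)⁻¹ 0 = (2 : ℂ)⁻¹ • Uflip := by
    simp [E00, Uflip, Matrix.kronecker_smul, smul_smul, hs, smul_add]
  have hE10 : E10 0 (Real.sqrt 2 : ℂ)⁻¹ (Real.sqrt 2 : ℂ)⁻¹ 0 = (2 : ℂ)⁻¹ • Uflip := by
    simp [E10, Uflip, Matrix.kronecker_smul, smul_smul, hs, smul_add]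
  have hE01 : E01 0 (Real.sqrt 2 : ℂ)⁻¹ (Real.sqrt 2 : ℂ)⁻¹ 0 = -((2 : ℂ)⁻¹ • Uflip) := by
    simp only [E01, Uflip, zero_smul, zero_sub, sub_zero, Matrix.kronecker_smul,
      smul_neg, smul_smul, hs, smul_add, neg_add, neg_neg, sub_eq_add_neg, neg_zero,
      add_zero, zero_add, kron_neg_right]

  have hE11 : E11 0 (Real.sqrt 2 : ℂ)⁻¹ (Real.sqrt 2 : ℂ)⁻¹ 0 = -((2 : ℂ)⁻¹ • Uflip) := by
    simp only [E11, Uflip, zero_smul, zero_sub, sub_zero, Matrix.kronecker_smul,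
      smul_neg, smul_smul, hs, smul_add, neg_add, neg_neg, sub_eq_add_neg, neg_zero,
      add_zero, zero_add, kron_neg_right]

  refine ⟨hE00, hE10, hE01, hE11, fun ρ => ?_⟩
  have h2 : star ((2:ℂ)⁻¹) = (2:ℂ)⁻¹ := by
    simp
  simp only [Fin.sum_univ_two, krausOp, if_true, if_false, Fin.one_eq_zero_iff,
    Nat.succ_ne_self, reduceIte, hE00, hE01, hE10, hE11]
  simp only [Matrix.conjTranspose_neg, Matrix.conjTranspose_smul, Matrix.neg_mul,
    Matrix.mul_neg, neg_neg, Matrix.smul_mul, Matrix.mul_smul, smul_smul, h2]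
  module
end
end

section
/- Let d ≥ 1 and let X be a complex matrix on ℂ^d ⊗ ℂ^d such that X commutes with V ⊗ V for every unitary d×d matrix V. Then there exist complex numbers α, β such that X = α·𝟙 + β·SWAP. -/
open Matrix Kronecker

noncomputable section

/-- The SWAP operator on `ℂ^d ⊗ ℂ^d`, with entries `SWAP_{(p,r),(q,s)} = δ_{ps} δ_{rq}`. -/
def SWAP (d : ℕ) : Matrix (Fin d × Fin d) (Fin d × Fin d) ℂ :=
  Matrix.of fun pr qs => if pr.1 = qs.2 ∧ pr.2 = qs.1 then 1 else 0

lemma diag_unitary (d : ℕ) (f : Fin d → ℂ) (hf : ∀ k, f k * star (f k) = 1) :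
    Matrix.diagonal f ∈ Matrix.unitaryGroup (Fin d) ℂ := by
  rw [Matrix.mem_unitaryGroup_iff]
  have : star (Matrix.diagonal f) = Matrix.diagonal (star f) := Matrix.diagonal_conjTranspose f
  rw [this, Matrix.diagonal_mul_diagonal]
  simp only [Pi.star_apply] at *
  rw [show (fun k => f k * star (f k)) = fun _ => (1:ℂ) from funext hf]
  exact Matrix.diagonal_one

lemma support_step (d : ℕ) (X : Matrix (Fin d × Fin d) (Fin d × Fin d) ℂ)
    (hX : ∀ V : Matrix (Fin d) (Fin d) ℂ, V ∈ Matrix.unitaryGroup (Fin d) ℂ →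
      X * (V ⊗ₖ V) = (V ⊗ₖ V) * X)
    (p r q s : Fin d) (h : X (p,r) (q,s) ≠ 0) :
    (p = q ∧ r = s) ∨ (p = s ∧ r = q) := by
  have key : ∀ t : Fin d,
      (if q = t then Complex.I else 1) * (if s = t then Complex.I else 1)
      = (if p = t then Complex.I else 1) * (if r = t then Complex.I else 1) := by
    intro t
    set f : Fin d → ℂ := fun k => if k = t then Complex.I else 1 with hfdef
    have hV : Matrix.diagonal f ∈ Matrix.unitaryGroup (Fin d) ℂ := by
      apply diag_unitary
      intro k
      simp only [hfdef]
      split <;> simp [Complex.ext_iff]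
    have hc := hX _ hV
    rw [Matrix.diagonal_kronecker_diagonal] at hc
    have hc2 := congrFun (congrFun hc (p,r)) (q,s)
    rw [Matrix.mul_diagonal, Matrix.diagonal_mul] at hc2
    have h3 : X (p,r) (q,s) * (f q * f s) = X (p,r) (q,s) * (f p * f r) := by
      linear_combination hc2
    exact mul_left_cancel₀ h h3
  by_cases hpq : p = q
  · subst hpq
    refine Or.inl ⟨rfl, ?_⟩
    have kr := key r
    clear key hX h
    by_contra hrs
    have hrs' : ¬ s = r := fun h => hrs h.symm
    split_ifs at kr <;> simp_all [Complex.ext_iff] <;> norm_num at kr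
  · have hqp : ¬ q = p := fun h => hpq h.symm
    have hs : s = p := by
      have kp := key p
      clear key hX h
      by_contra hps
      split_ifs at kp <;> simp_all [Complex.ext_iff] <;> norm_num at kp
    have hsq : ¬ s = q := by rw [hs]; exact hpq
    have hr : r = q := by
      have kq := key q
      clear key hX h
      by_contra hrq
      split_ifs at kq <;> simp_all [Complex.ext_iff] <;> norm_num at kq
    exact Or.inr ⟨hs.symm, hr⟩

/-- permutation matrix -/
def Pmat {ι : Type*} [DecidableEq ι] [Fintype ι] (e : Equiv.Perm ι) : Matrix ι ι ℂ :=
  Matrix.of fun i j => if i = e j then 1 else 0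

lemma mul_Pmat {ι κ : Type*} [DecidableEq ι] [Fintype ι] (e : Equiv.Perm ι)
    (M : Matrix κ ι ℂ) (i : κ) (j : ι) : (M * Pmat e) i j = M i (e j) := by
  rw [Matrix.mul_apply]
  rw [Finset.sum_eq_single (e j)]
  · simp [Pmat]
  · intro b _ hb; simp [Pmat, hb]
  · simp

lemma Pmat_mul {ι κ : Type*} [DecidableEq ι] [Fintype ι] (e : Equiv.Perm ι)
    (M : Matrix ι κ ℂ) (i : ι) (j : κ) : (Pmat e * M) i j = M (e.symm i) j := by
  rw [Matrix.mul_apply]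
  rw [Finset.sum_eq_single (e.symm i)]
  · simp [Pmat]
  · intro b _ hb
    have : ¬ i = e b := by
      intro h; exact hb (by simp [h])
    simp [Pmat, this]
  · simp

lemma Pmat_unitary (d : ℕ) (e : Equiv.Perm (Fin d)) :
    Pmat e ∈ Matrix.unitaryGroup (Fin d) ℂ := by
  rw [Matrix.mem_unitaryGroup_iff]
  ext i j
  rw [Matrix.mul_apply]
  simp only [Matrix.star_apply, Pmat, Matrix.of_apply, apply_ite (star : ℂ → ℂ), star_one,
    star_zero]
  rw [Finset.sum_eq_single (e.symm i)]
  · by_cases h : i = j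
    · simp [h, Matrix.one_apply]
    · have hj : ¬ j = e (e.symm i) := by simpa using fun hh => h hh.symm
      have hji : ¬ j = i := fun hh => h hh.symm
      simp [hj, Matrix.one_apply, hji, h]
  · intro b _ hb
    have : ¬ i = e b := fun h => hb (by simp [h])
    simp [this]
  · simp

lemma Pmat_kron (d : ℕ) (e : Equiv.Perm (Fin d)) :
    (Pmat e) ⊗ₖ (Pmat e) = Pmat (Equiv.prodCongr e e) := by
  ext ⟨p, r⟩ ⟨q, s⟩
  simp only [Matrix.kroneckerMap_apply, Pmat, Matrix.of_apply, Equiv.prodCongr_apply, Prod.map,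
    Prod.mk.injEq, Prod.ext_iff]
  split_ifs <;> simp_all

lemma perm_step (d : ℕ) (X : Matrix (Fin d × Fin d) (Fin d × Fin d) ℂ)
    (hX : ∀ V : Matrix (Fin d) (Fin d) ℂ, V ∈ Matrix.unitaryGroup (Fin d) ℂ →
      X * (V ⊗ₖ V) = (V ⊗ₖ V) * X)
    (e : Equiv.Perm (Fin d)) (p r q s : Fin d) :
    X (e p, e r) (e q, e s) = X (p, r) (q, s) := by
  have hc := hX _ (Pmat_unitary d e)
  rw [Pmat_kron] at hc
  have h2 := congrFun (congrFun hc (e p, e r)) (q, s)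
  rw [mul_Pmat, Pmat_mul] at h2
  simpa using h2

lemma exists_perm (d : ℕ) (p r q s : Fin d) (hpr : p ≠ r) (hqs : q ≠ s) :
    ∃ e : Equiv.Perm (Fin d), e p = q ∧ e r = s := by
  have hr' : Equiv.swap p q r ≠ q := by
    intro h
    have h2 : Equiv.swap p q r = Equiv.swap p q p := by rw [h, Equiv.swap_apply_left]
    exact hpr ((Equiv.swap p q).injective h2).symm
  refine ⟨(Equiv.swap p q).trans (Equiv.swap (Equiv.swap p q r) s), ?_, ?_⟩
  · rw [Equiv.trans_apply, Equiv.swap_apply_left,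
      Equiv.swap_apply_of_ne_of_ne (fun h => hr' h.symm) hqs]
  · rw [Equiv.trans_apply, Equiv.swap_apply_left]

lemma swap_comm_kron (d : ℕ) (V W : Matrix (Fin d) (Fin d) ℂ) :
    SWAP d * (V ⊗ₖ W) = (W ⊗ₖ V) * SWAP d := by
  ext ⟨p, r⟩ ⟨q, s⟩
  rw [Matrix.mul_apply, Matrix.mul_apply]
  rw [Finset.sum_eq_single ((r, p) : Fin d × Fin d), Finset.sum_eq_single ((s, q) : Fin d × Fin d)]
  · simp [SWAP, mul_comm]
  · rintro ⟨k, l⟩ _ hb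
    have : ¬ (k = s ∧ l = q) := fun ⟨h1, h2⟩ => hb (by rw [h1, h2])
    simp only [SWAP, Matrix.of_apply, if_neg this, mul_zero]
  · simp
  · rintro ⟨k, l⟩ _ hb
    have : ¬ (p = l ∧ r = k) := fun ⟨h1, h2⟩ => hb (by rw [h1, h2])
    simp only [SWAP, Matrix.of_apply, if_neg this, zero_mul]
  · simp

/-- the constant `1/√2` -/
def hcc : ℂ := ((Real.sqrt 2)⁻¹ : ℝ)

lemma hcc_sq : hcc * hcc = 1 / 2 := by
  rw [hcc, ← Complex.ofReal_mul, ← Real.sqrt_inv, Real.mul_self_sqrt (by norm_num)]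
  norm_num

lemma hcc_ne : hcc ≠ 0 := by
  intro h
  have := hcc_sq
  rw [h] at this
  norm_num at this

def hadam {d : ℕ} (i0 i1 : Fin d) : Matrix (Fin d) (Fin d) ℂ :=
  Matrix.of fun k l =>
    if k = i0 then (if l = i0 then hcc else if l = i1 then hcc else 0)
    else if k = i1 then (if l = i0 then hcc else if l = i1 then -hcc else 0)
    else if k = l then 1 else 0

lemma hadam_real {d : ℕ} (i0 i1 : Fin d) (j k : Fin d) :
    star (hadam i0 i1 j k) = hadam i0 i1 j k := by
  simp only [hadam, Matrix.of_apply, hcc]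
  split_ifs <;> simp

lemma sum2 {d : ℕ} {i0 i1 : Fin d} (h01 : i0 ≠ i1) (f : Fin d → ℂ)
    (hf : ∀ k, k ≠ i0 → k ≠ i1 → f k = 0) : ∑ k, f k = f i0 + f i1 := by
  rw [← Finset.sum_subset (Finset.subset_univ ({i0, i1} : Finset (Fin d)))]
  · rw [Finset.sum_pair h01]
  · intro x _ hx
    simp only [Finset.mem_insert, Finset.mem_singleton, not_or] at hx
    exact hf x hx.1 hx.2

lemma hadam_unitary {d : ℕ} {i0 i1 : Fin d} (h01 : i0 ≠ i1) :
    hadam i0 i1 ∈ Matrix.unitaryGroup (Fin d) ℂ := by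
  have h10 : i1 ≠ i0 := h01.symm
  set H := hadam i0 i1 with hH
  have E00 : H i0 i0 = hcc := by simp [hH, hadam]
  have E01 : H i0 i1 = hcc := by simp [hH, hadam, h10]
  have E10 : H i1 i0 = hcc := by simp [hH, hadam, h10]
  have E11 : H i1 i1 = -hcc := by simp [hH, hadam, h10]
  have Erow0 : ∀ k, k ≠ i0 → k ≠ i1 → H i0 k = 0 := by
    intro k hk0 hk1
    simp [hH, hadam, hk0, hk1]
  have Erow1 : ∀ k, k ≠ i0 → k ≠ i1 → H i1 k = 0 := by
    intro k hk0 hk1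
    simp [hH, hadam, hk0, hk1, h10]
  have Eoth : ∀ i k, i ≠ i0 → i ≠ i1 → H i k = if i = k then 1 else 0 := by
    intro i k hi0 hi1
    simp [hH, hadam, hi0, hi1]
  have Hstar : ∀ j k, star (H j k) = H j k := fun j k => hadam_real i0 i1 j k
  rw [Matrix.mem_unitaryGroup_iff]
  ext i j
  rw [Matrix.mul_apply]
  simp only [Matrix.star_apply, Hstar]
  by_cases hi0 : i = i0
  · rw [hi0]
    rw [sum2 h01 _ (fun k hk0 hk1 => by rw [Erow0 k hk0 hk1, zero_mul])]
    rw [E00, E01]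
    by_cases hj0 : j = i0
    · rw [hj0, E00, E01, Matrix.one_apply_eq]
      linear_combination 2 * hcc_sq
    · by_cases hj1 : j = i1
      · rw [hj1, E10, E11, Matrix.one_apply_ne (fun hh => h01 hh)]
        ring
      · rw [Eoth j i0 hj0 hj1, Eoth j i1 hj0 hj1, if_neg hj0, if_neg hj1,
          Matrix.one_apply_ne (fun hh => hj0 hh.symm)]
        ring
  · by_cases hi1 : i = i1
    · rw [hi1]
      rw [sum2 h01 _ (fun k hk0 hk1 => by rw [Erow1 k hk0 hk1, zero_mul])]
      rw [E10, E11]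
      by_cases hj0 : j = i0
      · rw [hj0, E00, E01, Matrix.one_apply_ne h10]
        ring
      · by_cases hj1 : j = i1
        · rw [hj1, E10, E11, Matrix.one_apply_eq]
          linear_combination 2 * hcc_sq
        · rw [Eoth j i0 hj0 hj1, Eoth j i1 hj0 hj1, if_neg hj0, if_neg hj1,
            Matrix.one_apply_ne (fun hh => hj1 hh.symm)]
          ring
    · rw [Finset.sum_eq_single i]
      · rw [Eoth i i hi0 hi1, if_pos rfl, one_mul]
        by_cases hj0 : j = i0
        · rw [hj0, Erow0 i hi0 hi1, Matrix.one_apply_ne (fun hh => hi0 hh)]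
        · by_cases hj1 : j = i1
          · rw [hj1, Erow1 i hi0 hi1, Matrix.one_apply_ne (fun hh => hi1 hh)]
          · rw [Eoth j i hj0 hj1, Matrix.one_apply]
            by_cases hij : i = j
            · rw [if_pos hij.symm, if_pos hij]
            · rw [if_neg (fun hh => hij hh.symm), if_neg hij]
      · intro b _ hb
        rw [Eoth i b hi0 hi1, if_neg (fun hh => hb hh.symm), zero_mul]
      · intro hmem
        exact absurd (Finset.mem_univ i) hmem

/-- If a matrix `X` on `ℂ^d ⊗ ℂ^d` commutes with `V ⊗ V` for every unitary
`d × d` matrix `V`, then `X = α·𝟙 + β·SWAP` for some complex numbers `α, β`. -/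
theorem commutant_of_tensor_square (d : ℕ) (hd : 1 ≤ d)
    (X : Matrix (Fin d × Fin d) (Fin d × Fin d) ℂ)
    (hX : ∀ V : Matrix (Fin d) (Fin d) ℂ, V ∈ Matrix.unitaryGroup (Fin d) ℂ →
      X * (V ⊗ₖ V) = (V ⊗ₖ V) * X) :
    ∃ α β : ℂ, X = α • (1 : Matrix (Fin d × Fin d) (Fin d × Fin d) ℂ) + β • SWAP d := by
  rcases Nat.lt_or_ge d 2 with hd2 | hd2
  · -- d = 1
    have hd1 : d = 1 := by omega
    subst hd1
    refine ⟨X (0,0) (0,0), 0, ?_⟩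
    ext i j
    have hi : i = ((0 : Fin 1), (0 : Fin 1)) := Subsingleton.elim _ _
    have hj : j = ((0 : Fin 1), (0 : Fin 1)) := Subsingleton.elim _ _
    subst hi; subst hj
    simp [Matrix.one_apply]
  · -- d ≥ 2
    have h0 : 0 < d := by omega
    have h1 : 1 < d := by omega
    set i0 : Fin d := ⟨0, h0⟩ with hi0def
    set i1 : Fin d := ⟨1, h1⟩ with hi1def
    have h01 : i0 ≠ i1 := by simp [hi0def, hi1def, Fin.ext_iff]
    set a := X (i0, i1) (i0, i1) with ha
    set b := X (i0, i1) (i1, i0) with hb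
    set cc := X (i0, i0) (i0, i0) with hcdef
    set γ := cc - a - b with hγ
    set D : Matrix (Fin d × Fin d) (Fin d × Fin d) ℂ :=
      Matrix.diagonal (fun pr => if pr.1 = pr.2 then (1 : ℂ) else 0) with hD
    -- constancy
    have hconst_a : ∀ p r : Fin d, p ≠ r → X (p, r) (p, r) = a := by
      intro p r hpr
      obtain ⟨e, he0, he1⟩ := exists_perm d i0 i1 p r h01 hpr
      rw [ha, ← perm_step d X hX e i0 i1 i0 i1, he0, he1]
    have hconst_b : ∀ p r : Fin d, p ≠ r → X (p, r) (r, p) = b := by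
      intro p r hpr
      obtain ⟨e, he0, he1⟩ := exists_perm d i0 i1 p r h01 hpr
      rw [hb, ← perm_step d X hX e i0 i1 i1 i0, he0, he1]
    have hconst_c : ∀ p : Fin d, X (p, p) (p, p) = cc := by
      intro p
      have := perm_step d X hX (Equiv.swap i0 p) i0 i0 i0 i0
      rw [Equiv.swap_apply_left] at this
      rw [hcdef, ← this]
    -- structure
    have hstruct : X = a • 1 + b • SWAP d + γ • D := by
      ext ⟨p, r⟩ ⟨q, s⟩
      simp only [Matrix.add_apply, Matrix.smul_apply, Matrix.one_apply, SWAP, Matrix.of_apply,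
        hD, Matrix.diagonal_apply, smul_eq_mul, Prod.mk.injEq]
      by_cases h1' : p = q ∧ r = s
      · obtain ⟨hq, hs⟩ := h1'
        subst hq; subst hs
        rw [if_pos (⟨rfl, rfl⟩ : p = p ∧ r = r)]
        by_cases hpr : p = r
        · subst hpr
          rw [if_pos (⟨rfl, rfl⟩ : p = p ∧ p = p), if_pos (⟨rfl, rfl⟩ : p = p ∧ p = p),
            if_pos rfl, hconst_c p, hγ]
          ring
        · rw [if_neg (fun hh : p = r ∧ r = p => hpr hh.1), if_pos (⟨rfl, rfl⟩ : p = p ∧ r = r),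
            if_neg hpr, hconst_a p r hpr]
          ring
      · by_cases h2' : p = s ∧ r = q
        · obtain ⟨hs, hq⟩ := h2'
          subst hs; subst hq
          have hpr : p ≠ r := fun h => h1' ⟨h, h.symm⟩
          rw [if_neg h1', if_pos (⟨rfl, rfl⟩ : p = p ∧ r = r), if_neg h1',
            hconst_b p r hpr]
          ring
        · have hz : X (p, r) (q, s) = 0 := by
            by_contra hnz
            rcases support_step d X hX p r q s hnz with h | h
            · exact h1' h
            · exact h2' h
          rw [hz, if_neg h1', if_neg h2', if_neg h1']
          ring
    -- use the Hadamard unitary to show γ = 0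
    have h10 : i1 ≠ i0 := fun h => h01 h.symm
    have hSK : SWAP d * ((hadam i0 i1) ⊗ₖ (hadam i0 i1)) =
        ((hadam i0 i1) ⊗ₖ (hadam i0 i1)) * SWAP d := swap_comm_kron d _ _
    have hcomm := hX (hadam i0 i1) (hadam_unitary h01)
    rw [hstruct, add_mul, add_mul, mul_add, mul_add, smul_mul_assoc, smul_mul_assoc,
      smul_mul_assoc, mul_smul_comm, mul_smul_comm, mul_smul_comm, one_mul, mul_one,
      hSK] at hcomm
    have hγDK := add_left_cancel hcomm
    have e := congrFun (congrFun hγDK (i0, i0)) (i0, i1)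
    simp only [Matrix.smul_apply, hD, smul_eq_mul] at e
    rw [Matrix.diagonal_mul, Matrix.mul_diagonal] at e
    simp only [Matrix.kroneckerMap_apply] at e
    have eH00 : hadam i0 i1 i0 i0 = hcc := by simp [hadam]
    have eH01 : hadam i0 i1 i0 i1 = hcc := by simp [hadam, h10]
    rw [eH00, eH01] at e
    simp only [if_pos rfl, if_neg h01, one_mul, mul_zero, if_true] at e
    have hγ0 : γ = 0 := by
      rcases mul_eq_zero.mp e with h | h
      · exact h
      · exact absurd h (mul_ne_zero hcc_ne hcc_ne)
    refine ⟨a, b, ?_⟩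
    rw [hstruct, hγ0, zero_smul, add_zero]
end
end

section
/- (Kraus expressibility norm; Theorem 1.) Let d ≥ 2, let ρ be a density matrix on ℂ^d, and set α = (d − Tr ρ²)/(d(d² − 1)), β = (d·Tr ρ² − 1)/(d(d² − 1)). Let (Ω, ν) be a probability space and let σ : Ω → M_d(ℂ) be a measurable family of density matrices (each σ_ω positive semidefinite with Tr σ_ω = 1), with ω ↦ σ_ω ⊗ σ_ω Bochner-integrable and ω ↦ Tr σ_ω² and (ω,ω') ↦ (Tr(σ_ω σ_{ω'}))² integrable. Define the expressibility operator A = (α·𝟙 + β·SWAP) − ∫_Ω σ_ω ⊗ σ_ω dν(ω) on ℂ^d ⊗ ℂ^d. Then ‖A‖₂² = (α² + β²)d² + 2αβd − 2(α + β·ν̄) + N, where ν̄ = ∫_Ω Tr σ_ω² dν(ω) is the ensemble-averaged purity and N = ∫_Ω ∫_Ω (Tr(σ_ω σ_{ω'}))² dν(ω) dν(ω') is the noise fluctuation term. -/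
open Matrix Kronecker MeasureTheory
open scoped ComplexOrder

noncomputable section

attribute [local instance] Matrix.normedAddCommGroup Matrix.normedSpace

/-- Port shim: the `ContinuousENorm` induced by the (local, elementwise) matrix norm, which
instance search no longer finds through `Matrix`'s own topology. -/
def krausMatrixContinuousENorm (m n : Type*) [Fintype m] [Fintype n] :
    ContinuousENorm (Matrix m n ℂ) :=
  SeminormedAddGroup.toContinuousENorm

attribute [local instance] krausMatrixContinuousENorm

/-- `α = (d − Tr ρ²)/(d(d² − 1))`. -/
def alphaOf (d : ℕ) (ρ : Matrix (Fin d) (Fin d) ℂ) : ℂ :=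
  ((d : ℂ) - (ρ * ρ).trace) / ((d : ℂ) * ((d : ℂ) ^ 2 - 1))

/-- `β = (d·Tr ρ² − 1)/(d(d² − 1))`. -/
def betaOf (d : ℕ) (ρ : Matrix (Fin d) (Fin d) ℂ) : ℂ :=
  ((d : ℂ) * (ρ * ρ).trace - 1) / ((d : ℂ) * ((d : ℂ) ^ 2 - 1))

lemma SWAP_conjTranspose (d : ℕ) : (SWAP d)ᴴ = SWAP d := by
  ext ⟨p, r⟩ ⟨q, s⟩
  simp only [conjTranspose_apply, SWAP, of_apply]
  by_cases h1 : p = s <;> by_cases h2 : r = q <;> simp [h1, h2, eq_comm]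

lemma SWAP_mul_SWAP (d : ℕ) : SWAP d * SWAP d = 1 := by
  ext ⟨p, r⟩ ⟨q, s⟩
  simp [Matrix.mul_apply, SWAP, Fintype.sum_prod_type, Matrix.one_apply, Prod.ext_iff,
    ite_and, Finset.sum_ite_eq, Finset.sum_ite_eq', eq_comm, and_comm]

lemma trace_SWAP (d : ℕ) : (SWAP d).trace = (d : ℂ) := by
  have h : ∀ p r : Fin d, (p = r ∧ r = p) ↔ p = r := fun p r => ⟨fun h => h.1, fun h => ⟨h, h.symm⟩⟩
  simp only [Matrix.trace, Matrix.diag, SWAP, of_apply, Fintype.sum_prod_type, h,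
    Finset.sum_ite_eq, Finset.mem_univ, if_true]
  simp

lemma trace_SWAP_mul_kron {d : ℕ} (A B : Matrix (Fin d) (Fin d) ℂ) :
    (SWAP d * (A ⊗ₖ B)).trace = (A * B).trace := by
  simp only [Matrix.trace, Matrix.diag, Matrix.mul_apply, SWAP, of_apply, kroneckerMap_apply,
    Fintype.sum_prod_type, ite_mul, one_mul, zero_mul, ite_and, Finset.sum_ite_eq,
    Finset.sum_ite_eq', Finset.mem_univ, if_true]
  exact Finset.sum_comm

lemma kron_conjTranspose {d : ℕ} (A B : Matrix (Fin d) (Fin d) ℂ) :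
    (A ⊗ₖ B)ᴴ = Aᴴ ⊗ₖ Bᴴ := by
  ext ⟨p, r⟩ ⟨q, s⟩
  simp [conjTranspose_apply, star_mul', mul_comm]

section IntegralLemmas

variable {n : Type*} [Fintype n]
variable {Ω : Type*} [MeasurableSpace Ω] {μ : Measure Ω}

lemma trace_integral (f : Ω → Matrix n n ℂ) (hf : Integrable f μ) :
    (∫ ω, f ω ∂μ).trace = ∫ ω, (f ω).trace ∂μ :=
  (ContinuousLinearMap.integral_comp_comm
    (LinearMap.toContinuousLinearMap (Matrix.traceLinearMap n ℂ ℂ)) hf).symm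

lemma trace_mul_integral_left (C : Matrix n n ℂ) (f : Ω → Matrix n n ℂ)
    (hf : Integrable f μ) :
    (C * ∫ ω, f ω ∂μ).trace = ∫ ω, (C * f ω).trace ∂μ :=
  (ContinuousLinearMap.integral_comp_comm
    (LinearMap.toContinuousLinearMap
      ((Matrix.traceLinearMap n ℂ ℂ).comp (LinearMap.mulLeft ℂ C))) hf).symm

lemma trace_integral_mul_right (C : Matrix n n ℂ) (f : Ω → Matrix n n ℂ)
    (hf : Integrable f μ) :
    ((∫ ω, f ω ∂μ) * C).trace = ∫ ω, (f ω * C).trace ∂μ :=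
  (ContinuousLinearMap.integral_comp_comm
    (LinearMap.toContinuousLinearMap
      ((Matrix.traceLinearMap n ℂ ℂ).comp (LinearMap.mulRight ℂ C))) hf).symm

def ctR : Matrix n n ℂ →ₗ[ℝ] Matrix n n ℂ where
  toFun := Matrix.conjTranspose
  map_add' M N := Matrix.conjTranspose_add M N
  map_smul' r M := by
    ext i j
    simp [Matrix.conjTranspose_apply, star_smul]

lemma conjTranspose_integral (f : Ω → Matrix n n ℂ) (hf : Integrable f μ) :
    (∫ ω, f ω ∂μ)ᴴ = ∫ ω, (f ω)ᴴ ∂μ :=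
  (ContinuousLinearMap.integral_comp_comm
    (LinearMap.toContinuousLinearMap (ctR (n := n))) hf).symm

end IntegralLemmas

/-- **Kraus expressibility norm; Theorem 1.** For a density matrix `ρ` on `ℂ^d`
and a measurable ensemble `σ : Ω → M_d(ℂ)` of density matrices (the channel outputs), the
squared Frobenius norm `Tr(A† A)` of the expressibility operator
`A = (α·𝟙 + β·SWAP) − ∫ σ_ω ⊗ σ_ω dν(ω)` equals
`(α² + β²)d² + 2αβd − 2(α + β·ν̄) + N`, where `ν̄ = ∫ Tr σ_ω² dν` is the ensemble-averaged
purity and `N = ∫∫ (Tr(σ_ω σ_ω'))² dν dν` is the noise fluctuation term. -/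
theorem kraus_expressibility_norm (d : ℕ) (hd : 2 ≤ d)
    (ρ : Matrix (Fin d) (Fin d) ℂ) (hρ : ρ.PosSemidef) (hρtr : ρ.trace = 1)
    {Ω : Type*} [MeasurableSpace Ω] (ν : Measure Ω) [IsProbabilityMeasure ν]
    (σ : Ω → Matrix (Fin d) (Fin d) ℂ)
    (hσ : ∀ ω, (σ ω).PosSemidef ∧ (σ ω).trace = 1)
    (hσint : Integrable (fun ω => σ ω ⊗ₖ σ ω) ν)
    (hpurint : Integrable (fun ω => (σ ω * σ ω).trace) ν)
    (hNint : Integrable (fun p : Ω × Ω => ((σ p.1 * σ p.2).trace) ^ 2) (ν.prod ν)) :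
    letI A : Matrix (Fin d × Fin d) (Fin d × Fin d) ℂ :=
      alphaOf d ρ • (1 : Matrix (Fin d × Fin d) (Fin d × Fin d) ℂ) + betaOf d ρ • SWAP d -
        ∫ ω, σ ω ⊗ₖ σ ω ∂ν
    (Aᴴ * A).trace =
      (alphaOf d ρ ^ 2 + betaOf d ρ ^ 2) * (d : ℂ) ^ 2 +
        2 * alphaOf d ρ * betaOf d ρ * (d : ℂ) -
        2 * (alphaOf d ρ + betaOf d ρ * ∫ ω, (σ ω * σ ω).trace ∂ν) +
        ∫ p : Ω × Ω, ((σ p.1 * σ p.2).trace) ^ 2 ∂(ν.prod ν) := by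
  set a := alphaOf d ρ with ha
  set b := betaOf d ρ with hb
  set S := ∫ ω, σ ω ⊗ₖ σ ω ∂ν with hSdef
  set B : Matrix (Fin d × Fin d) (Fin d × Fin d) ℂ := a • 1 + b • SWAP d with hBdef
  -- scalar reality
  have htρ : star ((ρ * ρ).trace) = (ρ * ρ).trace := by
    rw [← Matrix.trace_conjTranspose, Matrix.conjTranspose_mul, hρ.1]
  have hsa : star a = a := by
    simp [ha, alphaOf, star_div₀, star_sub, star_mul', star_pow, htρ]
  have hsb : star b = b := by
    simp [hb, betaOf, star_div₀, star_sub, star_mul', star_pow, htρ]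
  -- B is Hermitian
  have hBH : Bᴴ = B := by
    rw [hBdef, Matrix.conjTranspose_add, Matrix.conjTranspose_smul, Matrix.conjTranspose_smul,
      Matrix.conjTranspose_one, SWAP_conjTranspose, hsa, hsb]
  -- S is Hermitian
  have hSH : Sᴴ = S := by
    rw [hSdef, conjTranspose_integral _ hσint]
    refine integral_congr_ae (Filter.Eventually.of_forall fun ω => ?_)
    show (σ ω ⊗ₖ σ ω)ᴴ = σ ω ⊗ₖ σ ω
    rw [kron_conjTranspose, (hσ ω).1.1]
  -- trace of S
  have htrS : S.trace = 1 := by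
    rw [hSdef, trace_integral _ hσint]
    have : ∀ ω, (σ ω ⊗ₖ σ ω).trace = 1 := fun ω => by
      rw [Matrix.trace_kronecker, (hσ ω).2, mul_one]
    simp_rw [this]
    simp
  -- trace of SWAP * S
  have htrSwS : (SWAP d * S).trace = ∫ ω, (σ ω * σ ω).trace ∂ν := by
    rw [hSdef, trace_mul_integral_left _ _ hσint]
    exact integral_congr_ae (Filter.Eventually.of_forall fun ω => by dsimp only; exact trace_SWAP_mul_kron _ _)
  -- trace of S * S
  have htrSS : (S * S).trace = ∫ p : Ω × Ω, ((σ p.1 * σ p.2).trace) ^ 2 ∂(ν.prod ν) := by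
    rw [hSdef, trace_integral_mul_right _ _ hσint]
    have inner : ∀ ω, ((σ ω ⊗ₖ σ ω) * ∫ ω', σ ω' ⊗ₖ σ ω' ∂ν).trace
        = ∫ ω', ((σ ω * σ ω').trace) ^ 2 ∂ν := fun ω => by
      rw [trace_mul_integral_left _ _ hσint]
      refine integral_congr_ae (Filter.Eventually.of_forall fun ω' => ?_)
      show ((σ ω ⊗ₖ σ ω) * (σ ω' ⊗ₖ σ ω')).trace = (σ ω * σ ω').trace ^ 2
      rw [← Matrix.mul_kronecker_mul, Matrix.trace_kronecker, sq]
    simp_rw [inner]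
    exact integral_integral hNint
  -- expansion
  have expand : ((B - S)ᴴ * (B - S)).trace
      = (B * B).trace - (B * S).trace - (S * B).trace + (S * S).trace := by
    rw [Matrix.conjTranspose_sub, hBH, hSH, Matrix.sub_mul, Matrix.mul_sub, Matrix.mul_sub,
      Matrix.trace_sub, Matrix.trace_sub, Matrix.trace_sub]
    ring
  have htr1 : (1 : Matrix (Fin d × Fin d) (Fin d × Fin d) ℂ).trace = (d : ℂ) ^ 2 := by
    simp [Matrix.trace_one, sq]
  have hBB : (B * B).trace = (a ^ 2 + b ^ 2) * (d : ℂ) ^ 2 + 2 * a * b * (d : ℂ) := by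
    rw [hBdef]
    simp only [Matrix.add_mul, Matrix.mul_add, Matrix.smul_mul, Matrix.mul_smul, one_mul,
      mul_one, SWAP_mul_SWAP, Matrix.trace_add, Matrix.trace_smul, smul_smul, trace_SWAP, htr1,
      smul_eq_mul]
    ring
  have hBS : (B * S).trace = a + b * ∫ ω, (σ ω * σ ω).trace ∂ν := by
    rw [hBdef, Matrix.add_mul, Matrix.trace_add, Matrix.smul_mul, Matrix.smul_mul, one_mul,
      Matrix.trace_smul, Matrix.trace_smul, htrS, htrSwS, smul_eq_mul, smul_eq_mul, mul_one]
  have hSB : (S * B).trace = a + b * ∫ ω, (σ ω * σ ω).trace ∂ν := by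
    rw [hBdef, Matrix.mul_add, Matrix.trace_add, Matrix.mul_smul, Matrix.mul_smul, mul_one,
      Matrix.trace_smul, Matrix.trace_smul, htrS, Matrix.trace_mul_comm, htrSwS,
      smul_eq_mul, smul_eq_mul, mul_one]
  rw [expand, hBB, hBS, hSB, htrSS]
  ring
end
end

section
/- (Gradient variance formula.) Let H, V, ρ be Hermitian complex d×d matrices with V² = 𝟙. Then the variance of the cost gradient over θ uniformly distributed on [0, 2π] equals (1/2π) ∫₀^{2π} [d/dθ Tr(H · e^{−iθV} ρ e^{iθV})]² dθ = (1/2)·[ (Tr(ρ(H − VHV)))² − (Tr(ρ[V, H]))² ], where [A, B] = AB − BA. (Since the mean gradient is zero, this integral is the gradient variance.) -/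
/-!
Since `V² = 1`, `e^{zV} = cosh z + sinh z · V`, so the cost is the trigonometric polynomial
`(Tr ρ(H + VHV) + P cos 2θ + i Q sin 2θ) / 2` with `P = Tr ρ(H − VHV)` and `Q = Tr ρ[V, H]`.
Its derivative is `−P sin 2θ + i Q cos 2θ`, and by orthogonality of `sin 2θ` and `cos 2θ` on
`[0, 2π]` the square integrates to `π (P² + (iQ)²) = π (P² − Q²)`.
-/

open Matrix

noncomputable section

/-- The cost landscape `θ ↦ Tr(H · e^{−iθV} ρ e^{iθV})` of a parameterized quantum circuit. -/
def costFn (d : ℕ) (H V ρ : Matrix (Fin d) (Fin d) ℂ) (θ : ℝ) : ℂ :=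
  (H * NormedSpace.exp ((-(θ : ℂ) * Complex.I) • V) * ρ *
    NormedSpace.exp (((θ : ℂ) * Complex.I) • V)).trace

theorem NormedSpace.exp_smul_of_mul_self_eq_one {A : Type*} [Ring A] [Algebra ℂ A]
    [TopologicalSpace A] [IsTopologicalRing A] [ContinuousSMul ℂ A] [T2Space A]
    {x : A} (hx : x * x = 1) (z : ℂ) :
    NormedSpace.exp (z • x) = Complex.cosh z • (1 : A) + Complex.sinh z • x := by
  have hx_even (n : ℕ) : x ^ (2 * n) = 1 := by rw [pow_mul, sq, hx, one_pow]
  have hx_odd (n : ℕ) : x ^ (2 * n + 1) = x := by rw [pow_succ, hx_even, one_mul]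
  rw [NormedSpace.exp_eq_tsum ℂ]
  refine HasSum.tsum_eq (HasSum.even_add_odd ?_ ?_)
  · convert (Complex.hasSum_cosh z).smul_const (1 : A) using 2 with n
    rw [smul_pow, hx_even, smul_smul, div_eq_inv_mul]
  · convert (Complex.hasSum_sinh z).smul_const x using 2 with n
    rw [smul_pow, hx_odd, smul_smul, div_eq_inv_mul]

open Complex in
theorem costFn_eq {d : ℕ} {H V ρ : Matrix (Fin d) (Fin d) ℂ} (hV2 : V * V = 1) (θ : ℝ) :
    costFn d H V ρ θ =
      ((ρ * (H + V * H * V)).trace + (ρ * (H - V * H * V)).trace * cos (2 * θ) +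
        I * (ρ * (V * H - H * V)).trace * sin (2 * θ)) / 2 := by
  have hVHV : (H * V * ρ * V).trace = (ρ * (V * H * V)).trace := by
    rw [trace_mul_comm, ← Matrix.mul_assoc, trace_mul_comm]; simp only [Matrix.mul_assoc]
  have hHρV : (H * ρ * V).trace = (ρ * (V * H)).trace := by
    rw [trace_mul_comm, ← Matrix.mul_assoc, trace_mul_comm]
  rw [costFn, NormedSpace.exp_smul_of_mul_self_eq_one hV2,
    NormedSpace.exp_smul_of_mul_self_eq_one hV2, cosh_mul_I, sinh_mul_I, cosh_mul_I, sinh_mul_I,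
    cos_neg, sin_neg]
  simp only [Matrix.mul_add, Matrix.add_mul, Matrix.mul_smul, Matrix.smul_mul, Matrix.mul_one,
    trace_add, trace_smul, smul_eq_mul, hVHV, hHρV, Matrix.mul_sub, trace_sub]
  rw [trace_mul_comm H ρ, trace_mul_comm (H * V) ρ, cos_two_mul, sin_two_mul]
  linear_combination (-sin (θ : ℂ) ^ 2 * (ρ * (V * H * V)).trace) * I_sq +
    (ρ * (V * H * V)).trace * sin_sq_add_cos_sq (θ : ℂ)

open Real in
theorem integral_sin_nat_mul_sq {n : ℕ} (hn : n ≠ 0) :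
    ∫ θ in (0 : ℝ)..2 * π, sin (n * θ) ^ 2 = π := by
  have hsin : sin (n * (2 * π)) = 0 := by simpa using sin_nat_mul_two_pi_sub 0 n
  have hn' : (n : ℝ) ≠ 0 := Nat.cast_ne_zero.mpr hn
  rw [intervalIntegral.integral_comp_mul_left (fun x => sin x ^ 2) hn', integral_sin_sq, hsin]
  simp only [mul_zero, sin_zero, cos_zero, mul_one, cos_nat_mul_two_pi, sub_self, zero_add,
    sub_zero, smul_eq_mul]
  field_simp

open Real in
theorem integral_cos_nat_mul_sq {n : ℕ} (hn : n ≠ 0) :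
    ∫ θ in (0 : ℝ)..2 * π, cos (n * θ) ^ 2 = π := by
  have hsin : sin (n * (2 * π)) = 0 := by simpa using sin_nat_mul_two_pi_sub 0 n
  have hn' : (n : ℝ) ≠ 0 := Nat.cast_ne_zero.mpr hn
  rw [intervalIntegral.integral_comp_mul_left (fun x => cos x ^ 2) hn', integral_cos_sq, hsin]
  simp only [cos_nat_mul_two_pi, mul_zero, cos_zero, sin_zero, sub_self, zero_add, sub_zero,
    smul_eq_mul]
  field_simp

open Real in
theorem integral_sin_nat_mul_mul_cos_nat_mul (n : ℕ) :
    ∫ θ in (0 : ℝ)..2 * π, sin (n * θ) * cos (n * θ) = 0 := by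
  have hsin : sin (n * (2 * π)) = 0 := by simpa using sin_nat_mul_two_pi_sub 0 n
  rcases eq_or_ne n 0 with rfl | hn
  · simp
  rw [intervalIntegral.integral_comp_mul_left (fun x => sin x * cos x)
    (Nat.cast_ne_zero.mpr hn), integral_sin_mul_cos₁, hsin]
  simp

open Complex in
theorem integral_mul_sin_nat_mul_add_mul_cos_nat_mul_sq {n : ℕ} (hn : n ≠ 0) (p q : ℂ) :
    ∫ θ in (0 : ℝ)..2 * Real.pi, (p * sin (n * θ) + q * cos (n * θ)) ^ 2 =
      Real.pi * (p ^ 2 + q ^ 2) := by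
  have hexpand (θ : ℝ) : (p * sin (n * θ) + q * cos (n * θ)) ^ 2 =
      ((Real.sin (n * θ) ^ 2 : ℝ) : ℂ) * p ^ 2 +
        ((Real.sin (n * θ) * Real.cos (n * θ) : ℝ) : ℂ) * (2 * p * q) +
        ((Real.cos (n * θ) ^ 2 : ℝ) : ℂ) * q ^ 2 := by
    push_cast
    ring
  have hint {f : ℝ → ℝ} (hf : Continuous f) (c : ℂ) :
      IntervalIntegrable (fun θ => (f θ : ℂ) * c) MeasureTheory.volume 0 (2 * Real.pi) :=
    ((continuous_ofReal.comp hf).mul continuous_const).intervalIntegrable _ _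
  simp only [hexpand]
  rw [intervalIntegral.integral_add ((hint (by fun_prop) _).add (hint (by fun_prop) _))
      (hint (by fun_prop) _), intervalIntegral.integral_add (hint (by fun_prop) _)
      (hint (by fun_prop) _)]
  simp only [intervalIntegral.integral_mul_const, intervalIntegral.integral_ofReal,
    integral_sin_nat_mul_sq hn, integral_cos_nat_mul_sq hn,
    integral_sin_nat_mul_mul_cos_nat_mul]
  push_cast
  ring

open Complex in
theorem hasDerivAt_costFn {d : ℕ} {H V ρ : Matrix (Fin d) (Fin d) ℂ} (hV2 : V * V = 1) (θ : ℝ) :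
    HasDerivAt (costFn d H V ρ)
      (-(ρ * (H - V * H * V)).trace * sin (2 * θ) +
        I * (ρ * (V * H - H * V)).trace * cos (2 * θ)) θ := by
  have hcos : HasDerivAt (fun t : ℂ => cos (2 * t)) (-sin (2 * θ) * 2) θ :=
    ((hasDerivAt_id _).const_mul 2).ccos.congr_deriv (by simp)
  have hsin : HasDerivAt (fun t : ℂ => sin (2 * t)) (cos (2 * θ) * 2) θ :=
    ((hasDerivAt_id _).const_mul 2).csin.congr_deriv (by simp)
  rw [show costFn d H V ρ = _ from funext (costFn_eq hV2)]
  refine ((((hcos.const_mul _).const_add _).add (hsin.const_mul _)).div_const 2).comp_ofReal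
    |>.congr_deriv ?_
  ring

theorem gradient_variance_general (d : ℕ) (H V ρ : Matrix (Fin d) (Fin d) ℂ)
    (hV2 : V * V = 1) :
    (1 / (2 * Real.pi) : ℂ) *
        ∫ θ in (0 : ℝ)..(2 * Real.pi), (deriv (costFn d H V ρ) θ) ^ 2 =
      (1 / 2 : ℂ) *
        (((ρ * (H - V * H * V)).trace) ^ 2 - ((ρ * (V * H - H * V)).trace) ^ 2) := by
  have hderiv : deriv (costFn d H V ρ) = fun θ : ℝ =>
      -(ρ * (H - V * H * V)).trace * Complex.sin ((2 : ℕ) * θ) +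
        Complex.I * (ρ * (V * H - H * V)).trace * Complex.cos ((2 : ℕ) * θ) := by
    ext θ
    exact_mod_cast (hasDerivAt_costFn hV2 θ).deriv
  rw [hderiv, integral_mul_sin_nat_mul_add_mul_cos_nat_mul_sq two_ne_zero]
  have hπ : (Real.pi : ℂ) ≠ 0 := Complex.ofReal_ne_zero.mpr Real.pi_ne_zero
  field_simp
  linear_combination (ρ * (V * H - H * V)).trace ^ 2 * Complex.I_sq

/-- **Gradient variance formula.** For Hermitian `H, V, ρ` with `V² = 𝟙`, the
variance of the cost gradient over `θ` uniformly distributed on `[0, 2π]` equals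
`(1/2)·[(Tr(ρ(H − VHV)))² − (Tr(ρ[V,H]))²]`. -/
theorem gradient_variance (d : ℕ) (H V ρ : Matrix (Fin d) (Fin d) ℂ)
    (hH : H.IsHermitian) (hV : V.IsHermitian) (hρ : ρ.IsHermitian) (hV2 : V * V = 1) :
    (1 / (2 * Real.pi) : ℂ) *
        ∫ θ in (0 : ℝ)..(2 * Real.pi), (deriv (costFn d H V ρ) θ) ^ 2 =
      (1 / 2 : ℂ) *
        (((ρ * (H - V * H * V)).trace) ^ 2 - ((ρ * (V * H - H * V)).trace) ^ 2) :=
  gradient_variance_general d H V ρ hV2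
end
end
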